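/- For any Lagrangian subspaces Λ1, Λ2, Λ3, Π of a symplectic vector space Σ, the positive Maslov index satisfies the triangle inequality ind_Π(Λ1, Λ3) ≤ ind_Π(Λ1, Λ2) + ind_Π(Λ2, Λ3). -/

import Mathlib

open Module Submodule

/-- The skew-orthogonal complement (with respect to a bilinear form `σ`)
of a subspace `Γ`: all vectors `x` with `σ x y = 0` for all `y ∈ Γ`. -/
def skewCompl {E : Type*} [AddCommGroup E] [Module ℝ E]
    (σ : E →ₗ[ℝ] E →ₗ[ℝ] ℝ) (Γ : Submodule ℝ E) : Submodule ℝ E where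
  carrier := {x | ∀ y ∈ Γ, σ x y = 0}
  zero_mem' := by intro y hy; simp
  add_mem' := by
    intro a b ha hb y hy
    have h1 := ha y hy
    have h2 := hb y hy
    simp only [map_add, LinearMap.add_apply]
    rw [h1, h2, add_zero]
  smul_mem' := by
    intro c a ha y hy
    have h1 := ha y hy
    simp only [map_smul, LinearMap.smul_apply, smul_eq_mul]
    rw [h1, mul_zero]

/-- A subspace is Lagrangian if it coincides with its skew-orthogonal complement. -/
def IsLagrangian {E : Type*} [AddCommGroup E] [Module ℝ E]
    (σ : E →ₗ[ℝ] E →ₗ[ℝ] ℝ) (Λ : Submodule ℝ E) : Prop :=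
  Λ = skewCompl σ Λ

/-- The positive inertia index of the quadratic form `q` on `(Λ1 + Λ2) ∩ P` given by
`q (λ1 + λ2) = σ λ1 λ2` (`λi ∈ Λi`). -/
noncomputable def posIndPair {E : Type*} [AddCommGroup E] [Module ℝ E]
    (σ : E →ₗ[ℝ] E →ₗ[ℝ] ℝ) (P Λ1 Λ2 : Submodule ℝ E) : ℕ :=
  sSup {k | ∃ W : Submodule ℝ E, W ≤ (Λ1 ⊔ Λ2) ⊓ P ∧
    (∀ x ∈ W, x ≠ 0 → ∀ x1 ∈ Λ1, ∀ x2 ∈ Λ2, x = x1 + x2 → 0 < σ x1 x2) ∧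
    Module.finrank ℝ W = k}

/-- The positive Maslov index of the triple `(Λ1, P, Λ2)` of Lagrangian subspaces:
`ind_P (Λ1, Λ2) = ind⁺ q + (dim (Λ1 ∩ P) + dim (Λ2 ∩ P)) / 2 - dim (Λ1 ∩ Λ2 ∩ P)`. -/
noncomputable def maslovInd {E : Type*} [AddCommGroup E] [Module ℝ E]
    (σ : E →ₗ[ℝ] E →ₗ[ℝ] ℝ) (P Λ1 Λ2 : Submodule ℝ E) : ℚ :=
  (posIndPair σ P Λ1 Λ2 : ℚ)
    + ((Module.finrank ℝ ↥(Λ1 ⊓ P) : ℚ) + (Module.finrank ℝ ↥(Λ2 ⊓ P) : ℚ)) / 2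
    - (Module.finrank ℝ ↥(Λ1 ⊓ Λ2 ⊓ P) : ℚ)

/-!
The Maslov form `q(x₁ + x₂) = σ x₁ x₂` on `(Λa + Λb) ∩ P` is the image of the genuine quadratic
form `(x₁, x₂) ↦ σ x₁ x₂` on the space of splittings `x₁ ∈ Λa`, `x₂ ∈ Λb`, `x₁ + x₂ ∈ P`, so by
Sylvester's law the splittings contain a nonpositive subspace of codimension at most `ind⁺ q`.

For composable splittings `(x₁, x₂)`, `(-x₂, x₃)` of elements of `(Λ1 + Λ2) ∩ P` and
`(Λ2 + Λ3) ∩ P`, isotropy of `P` gives `σ x₁ x₃ = σ x₁ x₂ + σ (-x₂) x₃`. Hence a maximal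
`q₁₃`-positive subspace meets the set of sums `x₁ + x₃` in dimension at most
`ind⁺ q₁₂ + ind⁺ q₂₃`. By symplectic duality the codimension of that set in `(Λ1 + Λ3) ∩ P` is at
most `dim (Λ2 ∩ P) + dim (Λ1 ∩ Λ3 ∩ P) - dim (Λ1 ∩ Λ2 ∩ P) - dim (Λ2 ∩ Λ3 ∩ P)`, which is exactly
the defect of the dimension terms in the triangle inequality.
-/

section LinearAlgebra

variable {K M N : Type*} [Field K] [AddCommGroup M] [Module K M] [FiniteDimensional K M]
  [AddCommGroup N] [Module K N]

theorem Submodule.finrank_map_add_finrank_inf_ker (f : M →ₗ[K] N) (U : Submodule K M) :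
    finrank K (U.map f) + finrank K ↥(U ⊓ LinearMap.ker f) = finrank K U := by
  rw [← LinearMap.range_domRestrict, ← LinearMap.finrank_range_add_finrank_ker (f.domRestrict U),
    LinearMap.ker_domRestrict, ← finrank_map_subtype_eq, map_comap_subtype]

theorem Submodule.finrank_map_mkQ_add_finrank {C U : Submodule K M} (h : C ≤ U) :
    finrank K (U.map C.mkQ) + finrank K C = finrank K U := by
  rw [← finrank_map_add_finrank_inf_ker C.mkQ U, ker_mkQ, inf_eq_right.2 h]

theorem Submodule.finrank_map_le_add_of_inf_ker_le {N₁ N₂ : Type*} [AddCommGroup N₁]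
    [Module K N₁] [AddCommGroup N₂] [Module K N₂] {U : Submodule K M} {f : M →ₗ[K] N}
    {g : M →ₗ[K] N₁} {h : M →ₗ[K] N₂}
    (hker : U ⊓ LinearMap.ker g ⊓ LinearMap.ker h ≤ LinearMap.ker f) :
    finrank K (U.map f) ≤ finrank K (U.map g) + finrank K (U.map h) := by
  have hf := finrank_map_add_finrank_inf_ker f U
  have hg := finrank_map_add_finrank_inf_ker g U
  have hh := finrank_map_add_finrank_inf_ker h U
  have hsup := finrank_sup_add_finrank_inf_eq (U ⊓ LinearMap.ker g) (U ⊓ LinearMap.ker h)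
  have hsup_le : finrank K ↥(U ⊓ LinearMap.ker g ⊔ U ⊓ LinearMap.ker h) ≤ finrank K U :=
    finrank_mono (sup_le inf_le_left inf_le_left)
  have hinf_le : finrank K ↥(U ⊓ LinearMap.ker g ⊓ (U ⊓ LinearMap.ker h)) ≤
      finrank K ↥(U ⊓ LinearMap.ker f) :=
    finrank_mono fun _ ⟨⟨hxU, hxg⟩, _, hxh⟩ => ⟨hxU, hker ⟨⟨hxU, hxg⟩, hxh⟩⟩
  omega

end LinearAlgebra

section Symplectic

variable {E : Type*} [AddCommGroup E] [Module ℝ E] {σ : E →ₗ[ℝ] E →ₗ[ℝ] ℝ}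

theorem skewCompl_eq_orthogonal (hσ : σ.IsAlt) (Γ : Submodule ℝ E) :
    skewCompl σ Γ = LinearMap.BilinForm.orthogonal σ Γ := by
  ext x
  exact ⟨fun hx y hy => hσ.isRefl _ _ (hx y hy), fun hx y hy => hσ.isRefl _ _ (hx y hy)⟩

theorem skewCompl_sup (Γ Δ : Submodule ℝ E) :
    skewCompl σ (Γ ⊔ Δ) = skewCompl σ Γ ⊓ skewCompl σ Δ := by
  ext x
  refine ⟨fun hx => ⟨fun y hy => hx y (mem_sup_left hy), fun y hy => hx y (mem_sup_right hy)⟩,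
    fun ⟨hΓ, hΔ⟩ y hy => ?_⟩
  obtain ⟨a, ha, b, hb, rfl⟩ := mem_sup.1 hy
  rw [map_add, hΓ a ha, hΔ b hb, add_zero]

theorem IsLagrangian.le_skewCompl {Λ : Submodule ℝ E} (hΛ : IsLagrangian σ Λ) :
    Λ ≤ skewCompl σ Λ :=
  hΛ.le

theorem apply_eq_apply_of_add_eq {Λa Λb : Submodule ℝ E} (ha : Λa ≤ skewCompl σ Λa)
    (hb : Λb ≤ skewCompl σ Λb) {x₁ y₁ x₂ y₂ : E} (hx₁ : x₁ ∈ Λa) (hy₁ : y₁ ∈ Λa)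
    (hx₂ : x₂ ∈ Λb) (hy₂ : y₂ ∈ Λb) (h : x₁ + x₂ = y₁ + y₂) : σ x₁ x₂ = σ y₁ y₂ := by
  have hc : x₁ - y₁ = y₂ - x₂ := by rw [sub_eq_sub_iff_add_eq_add, h, add_comm]
  have hcb : x₁ - y₁ ∈ Λb := hc ▸ sub_mem hy₂ hx₂
  have hca : y₂ - x₂ ∈ Λa := hc ▸ sub_mem hx₁ hy₁
  calc σ x₁ x₂ = σ y₁ x₂ + σ (x₁ - y₁) x₂ := by
        rw [← LinearMap.add_apply, ← map_add, add_sub_cancel]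
    _ = σ y₁ x₂ + σ y₁ (y₂ - x₂) := by rw [hb hcb x₂ hx₂, ha hy₁ _ hca]
    _ = σ y₁ y₂ := by rw [← map_add, add_sub_cancel]

theorem apply_eq_add_of_add_eq_zero (hσ : σ.IsAlt) {P : Submodule ℝ E}
    (hP : P ≤ skewCompl σ P) {x₁ x₂ y₁ y₂ : E} (hx : x₁ + x₂ ∈ P) (hy : y₁ + y₂ ∈ P)
    (h : x₂ + y₁ = 0) : σ x₁ y₂ = σ x₁ x₂ + σ y₁ y₂ := by
  obtain rfl : y₁ = -x₂ := eq_neg_of_add_eq_zero_right h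
  have h0 := hP hx _ hy
  simp only [map_add, map_neg, LinearMap.add_apply, hσ x₂] at h0
  rw [map_neg, LinearMap.neg_apply]
  linarith

variable [FiniteDimensional ℝ E]

theorem finrank_add_finrank_skewCompl (hσ : σ.IsAlt) (hnd : σ.SeparatingLeft)
    (Γ : Submodule ℝ E) : finrank ℝ Γ + finrank ℝ (skewCompl σ Γ) = finrank ℝ E := by
  rw [skewCompl_eq_orthogonal hσ, LinearMap.BilinForm.finrank_orthogonal
    (hσ.isRefl.nondegenerate_iff_separatingLeft.2 hnd)]
  have := Γ.finrank_le
  omega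

theorem skewCompl_skewCompl (hσ : σ.IsAlt) (hnd : σ.SeparatingLeft) (Γ : Submodule ℝ E) :
    skewCompl σ (skewCompl σ Γ) = Γ := by
  rw [skewCompl_eq_orthogonal hσ, skewCompl_eq_orthogonal hσ,
    LinearMap.BilinForm.orthogonal_orthogonal
      (hσ.isRefl.nondegenerate_iff_separatingLeft.2 hnd) hσ.isRefl]

theorem skewCompl_inf (hσ : σ.IsAlt) (hnd : σ.SeparatingLeft) (Γ Δ : Submodule ℝ E) :
    skewCompl σ (Γ ⊓ Δ) = skewCompl σ Γ ⊔ skewCompl σ Δ := by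
  conv_lhs => rw [← skewCompl_skewCompl hσ hnd Γ, ← skewCompl_skewCompl hσ hnd Δ]
  rw [← skewCompl_sup, skewCompl_skewCompl hσ hnd]

theorem IsLagrangian.finrank_add_finrank (hσ : σ.IsAlt) (hnd : σ.SeparatingLeft)
    {Λ : Submodule ℝ E} (hΛ : IsLagrangian σ Λ) :
    finrank ℝ Λ + finrank ℝ Λ = finrank ℝ E := by
  conv_lhs => arg 2; rw [hΛ]
  exact finrank_add_finrank_skewCompl hσ hnd Λ

theorem IsLagrangian.finrank_inf_add_finrank (hσ : σ.IsAlt) (hnd : σ.SeparatingLeft)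
    {P : Submodule ℝ E} (hP : IsLagrangian σ P) (U : Submodule ℝ E) :
    finrank ℝ ↥(U ⊓ P) + finrank ℝ P = finrank ℝ U + finrank ℝ ↥(skewCompl σ U ⊓ P) := by
  have hsup := finrank_sup_add_finrank_inf_eq U P
  have hcompl := finrank_add_finrank_skewCompl hσ hnd (U ⊔ P)
  rw [skewCompl_sup, ← hP] at hcompl
  have := hP.finrank_add_finrank hσ hnd
  omega

theorem finrank_sup_inf_add_finrank_le (hσ : σ.IsAlt) (hnd : σ.SeparatingLeft)
    {P Λ1 Λ2 Λ3 : Submodule ℝ E} (hP : IsLagrangian σ P) (hΛ1 : IsLagrangian σ Λ1)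
    (hΛ2 : IsLagrangian σ Λ2) (hΛ3 : IsLagrangian σ Λ3) :
    finrank ℝ ↥((Λ1 ⊔ Λ3) ⊓ P) + finrank ℝ ↥(Λ1 ⊓ Λ2 ⊓ P) + finrank ℝ ↥(Λ2 ⊓ Λ3 ⊓ P) ≤
      finrank ℝ ↥((Λ1 ⊓ (Λ2 ⊔ P) ⊔ Λ3) ⊓ P) + finrank ℝ ↥(Λ2 ⊓ P) +
        finrank ℝ ↥(Λ1 ⊓ Λ3 ⊓ P) := by
  set X := Λ1 ⊓ (Λ2 ⊔ P)
  set Y := Λ1 ⊔ Λ2 ⊓ P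
  have hXY : skewCompl σ X = Y := by
    rw [skewCompl_inf hσ hnd, skewCompl_sup, ← hΛ1, ← hΛ2, ← hP]
  have h13 := hP.finrank_inf_add_finrank hσ hnd (Λ1 ⊔ Λ3)
  rw [skewCompl_sup, ← hΛ1, ← hΛ3] at h13
  have hX3 := hP.finrank_inf_add_finrank hσ hnd (X ⊔ Λ3)
  rw [skewCompl_sup, hXY, ← hΛ3] at hX3
  have hX := finrank_add_finrank_skewCompl hσ hnd X
  rw [hXY] at hX
  have hY : finrank ℝ Y + finrank ℝ ↥(Λ1 ⊓ Λ2 ⊓ P) = finrank ℝ Λ1 + finrank ℝ ↥(Λ2 ⊓ P) := by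
    rw [inf_assoc]; exact finrank_sup_add_finrank_inf_eq _ _
  have hsup13 := finrank_sup_add_finrank_inf_eq Λ1 Λ3
  have hsupX3 := finrank_sup_add_finrank_inf_eq X Λ3
  have hXΛ3 : finrank ℝ ↥(X ⊓ Λ3) ≤ finrank ℝ ↥(Λ1 ⊓ Λ3) :=
    finrank_mono (inf_le_inf_right Λ3 inf_le_left)
  have hY3 : finrank ℝ ↥(Λ2 ⊓ Λ3 ⊓ P) ≤ finrank ℝ ↥(Y ⊓ Λ3 ⊓ P) :=
    finrank_mono (le_inf (le_inf (le_sup_of_le_right (inf_le_inf_right P inf_le_left))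
      (inf_le_left.trans inf_le_right)) inf_le_right)
  have hn1 := hΛ1.finrank_add_finrank hσ hnd
  have hn3 := hΛ3.finrank_add_finrank hσ hnd
  have hnP := hP.finrank_add_finrank hσ hnd
  omega

end Symplectic

theorem QuadraticForm.exists_nonpos_sigPos_add_finrank_eq {𝕜 M : Type*} [Field 𝕜] [LinearOrder 𝕜]
    [IsStrictOrderedRing 𝕜] [AddCommGroup M] [Module 𝕜 M] [FiniteDimensional 𝕜 M]
    (Q : QuadraticForm 𝕜 M) :
    ∃ V : Submodule 𝕜 M, (∀ x ∈ V, Q x ≤ 0) ∧ sigPos Q + finrank 𝕜 V = finrank 𝕜 M := by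
  obtain ⟨N, hN, hNneg⟩ := exists_finrank_eq_sigNeg_and_negDef Q
  have hNnonpos : ∀ x ∈ N, Q x ≤ 0 := by
    intro x hx
    by_cases hx0 : x = 0
    · simp [hx0]
    · have := hNneg ⟨x, hx⟩ (by simpa using hx0)
      simp only [QuadraticMap.restrict_apply, neg_apply] at this
      linarith
  refine ⟨N ⊔ Q.radical, fun x hx => ?_, ?_⟩
  · obtain ⟨n, hn, r, hr, rfl⟩ := mem_sup.1 hx
    rw [add_comm, (QuadraticMap.mem_radical_iff'.1 hr).2]
    exact hNnonpos n hn
  · have hdisj : N ⊓ Q.radical = ⊥ := by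
      refine (Submodule.eq_bot_iff _).2 fun x ⟨hxN, hxr⟩ => ?_
      by_contra hx0
      have := hNneg ⟨x, hxN⟩ (by simpa using hx0)
      simp [(QuadraticMap.mem_radical_iff'.1 hxr).1] at this
    have hsup := finrank_sup_add_finrank_inf_eq N Q.radical
    rw [hdisj, finrank_bot] at hsup
    have := Q.sigPos_add_sigNeg_add_radical
    omega

section Splittings

variable {E : Type*} [AddCommGroup E] [Module ℝ E] {σ : E →ₗ[ℝ] E →ₗ[ℝ] ℝ}

variable (σ) in
def splitForm : QuadraticForm ℝ (E × E) :=
  LinearMap.BilinMap.toQuadraticMap (σ.compl₁₂ (LinearMap.fst ℝ E E) (LinearMap.snd ℝ E E))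

@[simp]
theorem splitForm_apply (x : E × E) : splitForm σ x = σ x.1 x.2 := rfl

def splittings (P Λa Λb : Submodule ℝ E) : Submodule ℝ (E × E) :=
  Λa.prod Λb ⊓ P.comap (LinearMap.fst ℝ E E + LinearMap.snd ℝ E E)

@[simp]
theorem mem_splittings {P Λa Λb : Submodule ℝ E} {x : E × E} :
    x ∈ splittings P Λa Λb ↔ (x.1 ∈ Λa ∧ x.2 ∈ Λb) ∧ x.1 + x.2 ∈ P :=
  Iff.rfl

def composableSplittings (P Λ1 Λ2 Λ3 : Submodule ℝ E) : Submodule ℝ ((E × E) × (E × E)) :=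
  (splittings P Λ1 Λ2).prod (splittings P Λ2 Λ3) ⊓
    LinearMap.ker (LinearMap.snd ℝ E E ∘ₗ LinearMap.fst ℝ (E × E) (E × E) +
      LinearMap.fst ℝ E E ∘ₗ LinearMap.snd ℝ (E × E) (E × E))

theorem mem_composableSplittings {P Λ1 Λ2 Λ3 : Submodule ℝ E} {z : (E × E) × (E × E)} :
    z ∈ composableSplittings P Λ1 Λ2 Λ3 ↔
      (z.1 ∈ splittings P Λ1 Λ2 ∧ z.2 ∈ splittings P Λ2 Λ3) ∧ z.1.2 + z.2.1 = 0 :=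
  Iff.rfl

variable (E) in
def outerSum : (E × E) × (E × E) →ₗ[ℝ] E :=
  LinearMap.fst ℝ E E ∘ₗ LinearMap.fst ℝ (E × E) (E × E) +
    LinearMap.snd ℝ E E ∘ₗ LinearMap.snd ℝ (E × E) (E × E)

@[simp]
theorem outerSum_apply (z : (E × E) × (E × E)) : outerSum E z = z.1.1 + z.2.2 := rfl

theorem map_outerSum_composableSplittings_le {P Λ1 Λ2 Λ3 : Submodule ℝ E} :
    (composableSplittings P Λ1 Λ2 Λ3).map (outerSum E) ≤ (Λ1 ⊔ Λ3) ⊓ P := by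
  rintro _ ⟨z, hz, rfl⟩
  obtain ⟨⟨hz₁₂, hz₂₃⟩, h0⟩ := mem_composableSplittings.1 hz
  obtain ⟨⟨h1, -⟩, h12⟩ := mem_splittings.1 hz₁₂
  obtain ⟨⟨-, h3⟩, h23⟩ := mem_splittings.1 hz₂₃
  refine ⟨add_mem (mem_sup_left h1) (mem_sup_right h3), ?_⟩
  have hsum : z.1.1 + z.2.2 = (z.1.1 + z.1.2) + (z.2.1 + z.2.2) - (z.1.2 + z.2.1) := by abel
  rw [outerSum_apply, hsum, h0, sub_zero]
  exact add_mem h12 h23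

theorem inf_sup_le_map_outerSum_composableSplittings {P Λ1 Λ2 Λ3 : Submodule ℝ E} :
    (Λ1 ⊓ (Λ2 ⊔ P) ⊔ Λ3) ⊓ P ≤ (composableSplittings P Λ1 Λ2 Λ3).map (outerSum E) := by
  rintro _ ⟨hx, hxP⟩
  obtain ⟨a, ⟨ha1, ha⟩, c, hc, rfl⟩ := mem_sup.1 hx
  obtain ⟨b, hb, p, hp, rfl⟩ := mem_sup.1 ha
  refine ⟨((b + p, -b), (b, c)), ⟨⟨mem_splittings.2 ⟨⟨ha1, neg_mem hb⟩, ?_⟩,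
    mem_splittings.2 ⟨⟨hb, hc⟩, ?_⟩⟩, neg_add_cancel b⟩, ?_⟩
  · simpa using hp
  · convert sub_mem hxP hp using 1
    abel
  · simp

theorem outerSum_eq_zero_of_nonpos (hσ : σ.IsAlt) {P Λ1 Λ2 Λ3 W : Submodule ℝ E}
    {C₁₂ C₂₃ : Submodule ℝ (E × E)}
    (hP : P ≤ skewCompl σ P)
    (hW : ∀ x ∈ W, x ≠ 0 → ∀ x1 ∈ Λ1, ∀ x2 ∈ Λ3, x = x1 + x2 → 0 < σ x1 x2)
    (hC₁₂ : ∀ x ∈ C₁₂, splitForm σ x ≤ 0) (hC₂₃ : ∀ x ∈ C₂₃, splitForm σ x ≤ 0)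
    {z : (E × E) × (E × E)} (hz : z ∈ composableSplittings P Λ1 Λ2 Λ3)
    (hzW : outerSum E z ∈ W) (hz₁ : z.1 ∈ C₁₂) (hz₂ : z.2 ∈ C₂₃) : outerSum E z = 0 := by
  obtain ⟨⟨hz₁₂, hz₂₃⟩, h0⟩ := mem_composableSplittings.1 hz
  obtain ⟨⟨h1, -⟩, h12⟩ := mem_splittings.1 hz₁₂
  obtain ⟨⟨-, h3⟩, h23⟩ := mem_splittings.1 hz₂₃
  by_contra hne
  have hpos := hW _ hzW hne z.1.1 h1 z.2.2 h3 rfl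
  rw [apply_eq_add_of_add_eq_zero hσ hP h12 h23 h0] at hpos
  have h₁₂ := hC₁₂ _ hz₁
  have h₂₃ := hC₂₃ _ hz₂
  rw [splitForm_apply] at h₁₂ h₂₃
  linarith

variable [FiniteDimensional ℝ E]

theorem posIndPair_bddAbove (P Λa Λb : Submodule ℝ E) :
    BddAbove {k | ∃ W : Submodule ℝ E, W ≤ (Λa ⊔ Λb) ⊓ P ∧
      (∀ x ∈ W, x ≠ 0 → ∀ x1 ∈ Λa, ∀ x2 ∈ Λb, x = x1 + x2 → 0 < σ x1 x2) ∧
      finrank ℝ W = k} := by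
  refine ⟨finrank ℝ E, ?_⟩
  rintro _ ⟨W, -, -, rfl⟩
  exact W.finrank_le

theorem le_posIndPair {P Λa Λb W : Submodule ℝ E}
    (hW : W ≤ (Λa ⊔ Λb) ⊓ P)
    (hpos : ∀ x ∈ W, x ≠ 0 → ∀ x1 ∈ Λa, ∀ x2 ∈ Λb, x = x1 + x2 → 0 < σ x1 x2) :
    finrank ℝ W ≤ posIndPair σ P Λa Λb :=
  le_csSup (posIndPair_bddAbove P Λa Λb) ⟨W, hW, hpos, rfl⟩

theorem exists_finrank_eq_posIndPair (P Λa Λb : Submodule ℝ E) :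
    ∃ W : Submodule ℝ E, W ≤ (Λa ⊔ Λb) ⊓ P ∧
      (∀ x ∈ W, x ≠ 0 → ∀ x1 ∈ Λa, ∀ x2 ∈ Λb, x = x1 + x2 → 0 < σ x1 x2) ∧
      finrank ℝ W = posIndPair σ P Λa Λb := by
  refine Nat.sSup_mem ?_ (posIndPair_bddAbove P Λa Λb)
  exact ⟨0, ⊥, bot_le, fun x hx hx0 => absurd ((mem_bot ℝ).1 hx) hx0, finrank_bot ℝ E⟩

theorem sigPos_splitForm_le_posIndPair (hσ : σ.IsAlt)
    {P Λa Λb : Submodule ℝ E} (ha : Λa ≤ skewCompl σ Λa) (hb : Λb ≤ skewCompl σ Λb) :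
    sigPos ((splitForm σ).restrict (splittings P Λa Λb)) ≤ posIndPair σ P Λa Λb := by
  set D := splittings P Λa Λb
  obtain ⟨U, hU, hUpos⟩ := exists_finrank_eq_sigPos_and_posDef ((splitForm σ).restrict D)
  let s : D →ₗ[ℝ] E := (LinearMap.fst ℝ E E + LinearMap.snd ℝ E E) ∘ₗ D.subtype
  have hs : ∀ d : D, s d = (d : E × E).1 + (d : E × E).2 := fun _ => rfl
  have hinj : U ⊓ LinearMap.ker s = ⊥ := by
    refine (Submodule.eq_bot_iff _).2 fun d ⟨hdU, hd⟩ => ?_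
    by_contra hd0
    have hpos := hUpos ⟨d, hdU⟩ (by simpa using hd0)
    replace hd : s d = 0 := hd
    rw [hs, add_eq_zero_iff_eq_neg'] at hd
    simp [hd, hσ _] at hpos
  have hdim := finrank_map_add_finrank_inf_ker s U
  rw [hinj, finrank_bot, add_zero] at hdim
  rw [← hU, ← hdim]
  refine le_posIndPair ?_ ?_
  · rintro _ ⟨d, -, rfl⟩
    obtain ⟨⟨h1, h2⟩, hP⟩ := mem_splittings.1 d.2
    exact ⟨add_mem (mem_sup_left h1) (mem_sup_right h2), hP⟩
  · rintro _ ⟨d, hdU, rfl⟩ hx0 x1 hx1 x2 hx2 hx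
    obtain ⟨⟨h1, h2⟩, -⟩ := mem_splittings.1 d.2
    rw [← apply_eq_apply_of_add_eq ha hb h1 hx1 h2 hx2 hx]
    have hd0 : d ≠ 0 := by rintro rfl; exact hx0 (map_zero s)
    simpa using hUpos ⟨d, hdU⟩ (by simpa using hd0)

theorem exists_nonpos_splitForm (hσ : σ.IsAlt)
    {P Λa Λb : Submodule ℝ E} (ha : Λa ≤ skewCompl σ Λa) (hb : Λb ≤ skewCompl σ Λb) :
    ∃ C ≤ splittings P Λa Λb, (∀ x ∈ C, splitForm σ x ≤ 0) ∧
      finrank ℝ (splittings P Λa Λb) ≤ finrank ℝ C + posIndPair σ P Λa Λb := by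
  obtain ⟨C, hC, hdim⟩ := QuadraticForm.exists_nonpos_sigPos_add_finrank_eq
    ((splitForm σ).restrict (splittings P Λa Λb))
  refine ⟨C.map (splittings P Λa Λb).subtype, map_subtype_le _ _, ?_, ?_⟩
  · rintro _ ⟨c, hc, rfl⟩
    exact hC c hc
  · rw [finrank_map_subtype_eq]
    have := sigPos_splitForm_le_posIndPair hσ (P := P) ha hb
    omega

theorem finrank_inf_map_outerSum_le (hσ : σ.IsAlt) {P Λ1 Λ2 Λ3 W : Submodule ℝ E}
    (hP : P ≤ skewCompl σ P) (hΛ1 : Λ1 ≤ skewCompl σ Λ1) (hΛ2 : Λ2 ≤ skewCompl σ Λ2)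
    (hΛ3 : Λ3 ≤ skewCompl σ Λ3)
    (hW : ∀ x ∈ W, x ≠ 0 → ∀ x1 ∈ Λ1, ∀ x2 ∈ Λ3, x = x1 + x2 → 0 < σ x1 x2) :
    finrank ℝ ↥(W ⊓ (composableSplittings P Λ1 Λ2 Λ3).map (outerSum E)) ≤
      posIndPair σ P Λ1 Λ2 + posIndPair σ P Λ2 Λ3 := by
  obtain ⟨C₁₂, hC₁₂, hC₁₂nonpos, hdim₁₂⟩ := exists_nonpos_splitForm hσ (P := P) hΛ1 hΛ2
  obtain ⟨C₂₃, hC₂₃, hC₂₃nonpos, hdim₂₃⟩ := exists_nonpos_splitForm hσ (P := P) hΛ2 hΛ3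
  set K := composableSplittings P Λ1 Λ2 Λ3
  set W' := K ⊓ W.comap (outerSum E)
  let g₁₂ := C₁₂.mkQ ∘ₗ LinearMap.fst ℝ (E × E) (E × E)
  let g₂₃ := C₂₃.mkQ ∘ₗ LinearMap.snd ℝ (E × E) (E × E)
  have hker : W' ⊓ LinearMap.ker g₁₂ ⊓ LinearMap.ker g₂₃ ≤ LinearMap.ker (outerSum E) := by
    rintro z ⟨⟨⟨hzK, hzW⟩, hz₁⟩, hz₂⟩
    simp only [g₁₂, g₂₃, SetLike.mem_coe, LinearMap.mem_ker, LinearMap.comp_apply, mkQ_apply,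
      Quotient.mk_eq_zero, LinearMap.fst_apply, LinearMap.snd_apply] at hz₁ hz₂
    exact outerSum_eq_zero_of_nonpos hσ hP hW hC₁₂nonpos hC₂₃nonpos hzK hzW hz₁ hz₂
  have h₁₂ : finrank ℝ (W'.map g₁₂) ≤ finrank ℝ ((splittings P Λ1 Λ2).map C₁₂.mkQ) := by
    refine finrank_mono ?_
    rw [map_comp]
    exact map_mono fun _ ⟨z, ⟨hzK, _⟩, hz⟩ => hz ▸ hzK.1.1
  have h₂₃ : finrank ℝ (W'.map g₂₃) ≤ finrank ℝ ((splittings P Λ2 Λ3).map C₂₃.mkQ) := by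
    refine finrank_mono ?_
    rw [map_comp]
    exact map_mono fun _ ⟨z, ⟨hzK, _⟩, hz⟩ => hz ▸ hzK.1.2
  have hq₁₂ := finrank_map_mkQ_add_finrank hC₁₂
  have hq₂₃ := finrank_map_mkQ_add_finrank hC₂₃
  calc finrank ℝ ↥(W ⊓ K.map (outerSum E)) ≤ finrank ℝ (W'.map (outerSum E)) :=
        finrank_mono <| by rintro _ ⟨hxW, z, hzK, rfl⟩; exact ⟨z, ⟨hzK, hxW⟩, rfl⟩
    _ ≤ finrank ℝ (W'.map g₁₂) + finrank ℝ (W'.map g₂₃) := finrank_map_le_add_of_inf_ker_le hker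
    _ ≤ posIndPair σ P Λ1 Λ2 + posIndPair σ P Λ2 Λ3 := by omega

theorem posIndPair_add_finrank_le (hσ : σ.IsAlt) (hnd : σ.SeparatingLeft)
    {P Λ1 Λ2 Λ3 : Submodule ℝ E} (hP : IsLagrangian σ P) (hΛ1 : IsLagrangian σ Λ1)
    (hΛ2 : IsLagrangian σ Λ2) (hΛ3 : IsLagrangian σ Λ3) :
    posIndPair σ P Λ1 Λ3 + finrank ℝ ↥(Λ1 ⊓ Λ2 ⊓ P) + finrank ℝ ↥(Λ2 ⊓ Λ3 ⊓ P) ≤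
      posIndPair σ P Λ1 Λ2 + posIndPair σ P Λ2 Λ3 + finrank ℝ ↥(Λ2 ⊓ P) +
        finrank ℝ ↥(Λ1 ⊓ Λ3 ⊓ P) := by
  obtain ⟨W, hWle, hWpos, hWdim⟩ := exists_finrank_eq_posIndPair (σ := σ) P Λ1 Λ3
  set S := (composableSplittings P Λ1 Λ2 Λ3).map (outerSum E)
  have hS : finrank ℝ ↥((Λ1 ⊓ (Λ2 ⊔ P) ⊔ Λ3) ⊓ P) ≤ finrank ℝ S :=
    finrank_mono inf_sup_le_map_outerSum_composableSplittings
  have hcodim := finrank_sup_inf_add_finrank_le hσ hnd hP hΛ1 hΛ2 hΛ3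
  have hWS := finrank_sup_add_finrank_inf_eq W S
  have hWS_le : finrank ℝ ↥(W ⊔ S) ≤ finrank ℝ ↥((Λ1 ⊔ Λ3) ⊓ P) :=
    finrank_mono (sup_le hWle map_outerSum_composableSplittings_le)
  have hWS_inf : finrank ℝ ↥(W ⊓ S) ≤ _ := finrank_inf_map_outerSum_le hσ hP.le_skewCompl
    hΛ1.le_skewCompl hΛ2.le_skewCompl hΛ3.le_skewCompl hWpos
  omega

end Splittings

theorem stmt_12 {E : Type*} [AddCommGroup E] [Module ℝ E] [FiniteDimensional ℝ E]
    (σ : E →ₗ[ℝ] E →ₗ[ℝ] ℝ)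
    (halt : ∀ x : E, σ x x = 0)
    (hnondeg : ∀ x : E, (∀ y : E, σ x y = 0) → x = 0)
    (P Λ1 Λ2 Λ3 : Submodule ℝ E)
    (hP : IsLagrangian σ P) (hΛ1 : IsLagrangian σ Λ1)
    (hΛ2 : IsLagrangian σ Λ2) (hΛ3 : IsLagrangian σ Λ3) :
    maslovInd σ P Λ1 Λ3 ≤ maslovInd σ P Λ1 Λ2 + maslovInd σ P Λ2 Λ3 := by
  have h := posIndPair_add_finrank_le halt hnondeg hP hΛ1 hΛ2 hΛ3
  have hq : (posIndPair σ P Λ1 Λ3 + finrank ℝ ↥(Λ1 ⊓ Λ2 ⊓ P) + finrank ℝ ↥(Λ2 ⊓ Λ3 ⊓ P) : ℚ) ≤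
      posIndPair σ P Λ1 Λ2 + posIndPair σ P Λ2 Λ3 + finrank ℝ ↥(Λ2 ⊓ P) +
        finrank ℝ ↥(Λ1 ⊓ Λ3 ⊓ P) := by
    exact_mod_cast h
  unfold maslovInd
  linarith
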